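/- arXiv:1310.1004 — 5 statements merged into one kernel-verified Lean document; each statement's English description precedes it below -/
import Mathlib

section
/- Let n ≥ 3, let φ be a permutation of I = {1,…,n}, and let k, l be two distinct blocks of the Möbius n-pair 𝔐_{(n,φ)}. Then |k ∩ l| ∈ {0, 1, 2, n−2}. If k and l are both A-blocks, or both B-blocks, then |k ∩ l| = n−2. Otherwise k = A_i and l = B_j for some i, j ∈ I, and: (i) |A_i ∩ B_j| = 0 iff φ(j) = i = j; (ii) |A_i ∩ B_j| = 1 iff (φ(j) = i and i ≠ j) or (φ(j) ≠ i and i = j); (iii) |A_i ∩ B_j| = 2 iff φ(j) ≠ i and i ≠ j. -/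
abbrev MPoint (n : ℕ) := Fin n ⊕ Fin n

/-- The block `A_i = (A \ {a_i}) ∪ {b_i}`. -/
def Ablock (n : ℕ) (i : Fin n) : Set (MPoint n) :=
  Sum.inl '' {j | j ≠ i} ∪ {Sum.inr i}

/-- The block `B_i = (B \ {b_i}) ∪ {a_{φ(i)}}`. -/
def Bblock (n : ℕ) (φ : Equiv.Perm (Fin n)) (i : Fin n) : Set (MPoint n) :=
  Sum.inr '' {j | j ≠ i} ∪ {Sum.inl (φ i)}

def ABlocks (n : ℕ) : Set (Set (MPoint n)) := Set.range (Ablock n)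

def BBlocks (n : ℕ) (φ : Equiv.Perm (Fin n)) : Set (Set (MPoint n)) := Set.range (Bblock n φ)

/-- The blocks of the Möbius `n`-pair `𝔐_{(n,φ)}`; its point set is all of `MPoint n`. -/
def MBlocks (n : ℕ) (φ : Equiv.Perm (Fin n)) : Set (Set (MPoint n)) :=
  ABlocks n ∪ BBlocks n φ

/-!
Two distinct A-blocks `A_i`, `A_j` meet exactly in the points `a_m` with `m ∉ {i, j}`, and two
distinct B-blocks likewise in the `b_m` with `m ∉ {i, j}` (their `a`-points differ as `φ` is
injective). An A-block `A_i` and a B-block `B_j` can only share `a_{φ j}`, which lies in `A_i`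
iff `φ j ≠ i`, and `b_i`, which lies in `B_j` iff `i ≠ j`.
-/

section MoebiusPair

variable {n : ℕ} (φ : Equiv.Perm (Fin n)) {i j a : Fin n}

@[simp] lemma inl_mem_Ablock : (Sum.inl a : MPoint n) ∈ Ablock n i ↔ a ≠ i := by
  simp [Ablock]

@[simp] lemma inr_mem_Ablock : (Sum.inr a : MPoint n) ∈ Ablock n i ↔ a = i := by
  simp [Ablock]

@[simp] lemma inl_mem_Bblock : (Sum.inl a : MPoint n) ∈ Bblock n φ i ↔ a = φ i := by
  simp [Bblock]

@[simp] lemma inr_mem_Bblock : (Sum.inr a : MPoint n) ∈ Bblock n φ i ↔ a ≠ i := by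
  simp [Bblock]

lemma ncard_compl_pair (h : i ≠ j) : ({i, j}ᶜ : Set (Fin n)).ncard = n - 2 := by
  rw [Set.ncard_compl, Set.ncard_pair h, Nat.card_eq_fintype_card, Fintype.card_fin]

lemma Ablock_inter_Ablock (h : i ≠ j) : Ablock n i ∩ Ablock n j = Sum.inl '' {i, j}ᶜ := by
  ext (a | a) <;> simp +contextual [not_or, h]

lemma Bblock_inter_Bblock (h : i ≠ j) :
    Bblock n φ i ∩ Bblock n φ j = Sum.inr '' {i, j}ᶜ := by
  ext (a | a) <;> simp +contextual [not_or, h]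

lemma ncard_Ablock_inter_Ablock (h : i ≠ j) : (Ablock n i ∩ Ablock n j).ncard = n - 2 := by
  rw [Ablock_inter_Ablock h, Set.ncard_image_of_injective _ Sum.inl_injective,
    ncard_compl_pair h]

lemma ncard_Bblock_inter_Bblock (h : i ≠ j) :
    (Bblock n φ i ∩ Bblock n φ j).ncard = n - 2 := by
  rw [Bblock_inter_Bblock φ h, Set.ncard_image_of_injective _ Sum.inr_injective,
    ncard_compl_pair h]

lemma Ablock_inter_Bblock :
    Ablock n i ∩ Bblock n φ j =
      (({φ j} \ {i} : Finset (Fin n)).disjSum ({i} \ {j}) : Set (MPoint n)) := by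
  ext (a | a) <;> simp [and_comm]

lemma ncard_Ablock_inter_Bblock :
    (Ablock n i ∩ Bblock n φ j).ncard =
      (if φ j = i then 0 else 1) + (if i = j then 0 else 1) := by
  rw [Ablock_inter_Bblock, Set.ncard_coe_finset, Finset.card_disjSum, Finset.card_sdiff,
    Finset.card_sdiff]
  split_ifs <;> simp_all

lemma ncard_Ablock_inter_Bblock_le_two : (Ablock n i ∩ Bblock n φ j).ncard ≤ 2 := by
  rw [ncard_Ablock_inter_Bblock]
  split_ifs <;> simp

lemma ncard_Ablock_inter_Bblock_eq_iff :
    ((Ablock n i ∩ Bblock n φ j).ncard = 0 ↔ (φ j = i ∧ i = j)) ∧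
    ((Ablock n i ∩ Bblock n φ j).ncard = 1 ↔
      ((φ j = i ∧ i ≠ j) ∨ (φ j ≠ i ∧ i = j))) ∧
    ((Ablock n i ∩ Bblock n φ j).ncard = 2 ↔ (φ j ≠ i ∧ i ≠ j)) := by
  rw [ncard_Ablock_inter_Bblock]
  by_cases h₁ : φ j = i <;> by_cases h₂ : i = j <;> simp_all

variable {φ} {k l : Set (MPoint n)}

lemma ncard_inter_of_same_kind (hkl : k ≠ l)
    (h : (k ∈ ABlocks n ∧ l ∈ ABlocks n) ∨ (k ∈ BBlocks n φ ∧ l ∈ BBlocks n φ)) :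
    (k ∩ l).ncard = n - 2 := by
  rcases h with ⟨⟨i, rfl⟩, ⟨j, rfl⟩⟩ | ⟨⟨i, rfl⟩, ⟨j, rfl⟩⟩
  · exact ncard_Ablock_inter_Ablock (ne_of_apply_ne _ hkl)
  · exact ncard_Bblock_inter_Bblock φ (ne_of_apply_ne _ hkl)

lemma exists_Ablock_Bblock_of_not_same_kind (hk : k ∈ MBlocks n φ) (hl : l ∈ MBlocks n φ)
    (h : ¬((k ∈ ABlocks n ∧ l ∈ ABlocks n) ∨ (k ∈ BBlocks n φ ∧ l ∈ BBlocks n φ))) :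
    ∃ i j : Fin n,
      (k = Ablock n i ∧ l = Bblock n φ j) ∨ (k = Bblock n φ j ∧ l = Ablock n i) := by
  rcases hk with ⟨i, rfl⟩ | ⟨j, rfl⟩ <;> rcases hl with ⟨i', rfl⟩ | ⟨j', rfl⟩
  · exact absurd (Or.inl ⟨⟨i, rfl⟩, ⟨i', rfl⟩⟩) h
  · exact ⟨i, j', Or.inl ⟨rfl, rfl⟩⟩
  · exact ⟨i', j, Or.inr ⟨rfl, rfl⟩⟩
  · exact absurd (Or.inr ⟨⟨j, rfl⟩, ⟨j', rfl⟩⟩) h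

lemma ncard_inter_mem (hk : k ∈ MBlocks n φ) (hl : l ∈ MBlocks n φ) (hkl : k ≠ l) :
    (k ∩ l).ncard ∈ ({0, 1, 2, n - 2} : Set ℕ) := by
  by_cases h : (k ∈ ABlocks n ∧ l ∈ ABlocks n) ∨ (k ∈ BBlocks n φ ∧ l ∈ BBlocks n φ)
  · simp [ncard_inter_of_same_kind hkl h]
  have hle : (k ∩ l).ncard ≤ 2 := by
    obtain ⟨i, j, ⟨rfl, rfl⟩ | ⟨rfl, rfl⟩⟩ := exists_Ablock_Bblock_of_not_same_kind hk hl h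
    · exact ncard_Ablock_inter_Bblock_le_two φ
    · exact Set.inter_comm _ _ ▸ ncard_Ablock_inter_Bblock_le_two φ
  simp only [Set.mem_insert_iff, Set.mem_singleton_iff]
  omega

end MoebiusPair

theorem stmt0_general (n : ℕ) (φ : Equiv.Perm (Fin n))
    (k l : Set (MPoint n)) (hk : k ∈ MBlocks n φ) (hl : l ∈ MBlocks n φ) (hkl : k ≠ l) :
    (k ∩ l).ncard ∈ ({0, 1, 2, n - 2} : Set ℕ) ∧
    (((k ∈ ABlocks n ∧ l ∈ ABlocks n) ∨ (k ∈ BBlocks n φ ∧ l ∈ BBlocks n φ)) →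
      (k ∩ l).ncard = n - 2) ∧
    (¬((k ∈ ABlocks n ∧ l ∈ ABlocks n) ∨ (k ∈ BBlocks n φ ∧ l ∈ BBlocks n φ)) →
      ∃ i j : Fin n, (k = Ablock n i ∧ l = Bblock n φ j) ∨ (k = Bblock n φ j ∧ l = Ablock n i)) ∧
    (∀ i j : Fin n,
      ((Ablock n i ∩ Bblock n φ j).ncard = 0 ↔ (φ j = i ∧ i = j)) ∧
      ((Ablock n i ∩ Bblock n φ j).ncard = 1 ↔
        ((φ j = i ∧ i ≠ j) ∨ (φ j ≠ i ∧ i = j))) ∧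
      ((Ablock n i ∩ Bblock n φ j).ncard = 2 ↔ (φ j ≠ i ∧ i ≠ j))) :=
  ⟨ncard_inter_mem hk hl hkl, ncard_inter_of_same_kind hkl,
    exists_Ablock_Bblock_of_not_same_kind hk hl, fun _ _ => ncard_Ablock_inter_Bblock_eq_iff φ⟩

theorem stmt0 (n : ℕ) (hn : 3 ≤ n) (φ : Equiv.Perm (Fin n))
    (k l : Set (MPoint n)) (hk : k ∈ MBlocks n φ) (hl : l ∈ MBlocks n φ) (hkl : k ≠ l) :
    (k ∩ l).ncard ∈ ({0, 1, 2, n - 2} : Set ℕ) ∧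
    (((k ∈ ABlocks n ∧ l ∈ ABlocks n) ∨ (k ∈ BBlocks n φ ∧ l ∈ BBlocks n φ)) →
      (k ∩ l).ncard = n - 2) ∧
    (¬((k ∈ ABlocks n ∧ l ∈ ABlocks n) ∨ (k ∈ BBlocks n φ ∧ l ∈ BBlocks n φ)) →
      ∃ i j : Fin n, (k = Ablock n i ∧ l = Bblock n φ j) ∨ (k = Bblock n φ j ∧ l = Ablock n i)) ∧
    (∀ i j : Fin n,
      ((Ablock n i ∩ Bblock n φ j).ncard = 0 ↔ (φ j = i ∧ i = j)) ∧
      ((Ablock n i ∩ Bblock n φ j).ncard = 1 ↔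
        ((φ j = i ∧ i ≠ j) ∨ (φ j ≠ i ∧ i = j))) ∧
      ((Ablock n i ∩ Bblock n φ j).ncard = 2 ↔ (φ j ≠ i ∧ i ≠ j))) :=
  stmt0_general n φ k l hk hl hkl
end

section
/- The Möbius configuration 𝔐_{(4,id)} admits exactly 3 special decompositions, i.e., exactly 3 ways (as unordered pairs of simplices) to present its point set as two complementary mutually inscribed 4-simplices, each of which is distinct from S_A and S_B. -/
/-- A "simplex" of a decomposition: a pair (points, blocks). -/
abbrev MSimplex (n : ℕ) := Set (MPoint n) × Set (Set (MPoint n))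

def SimplexA (n : ℕ) : MSimplex n := (Set.range Sum.inl, ABlocks n)

def SimplexB (n : ℕ) (φ : Equiv.Perm (Fin n)) : MSimplex n := (Set.range Sum.inr, BBlocks n φ)

/-- A decomposition of 𝔐_{(n,φ)} into two complementary mutually inscribed n-simplices. -/
def IsDecomp (n : ℕ) (φ : Equiv.Perm (Fin n)) (S₁ S₂ : MSimplex n) : Prop :=
  S₁.1 ∪ S₂.1 = Set.univ ∧ Disjoint S₁.1 S₂.1 ∧ S₁.1.ncard = n ∧ S₂.1.ncard = n ∧
  S₁.2 ∪ S₂.2 = MBlocks n φ ∧ Disjoint S₁.2 S₂.2 ∧ S₁.2.ncard = n ∧ S₂.2.ncard = n ∧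
  (∀ l ∈ S₁.2, (l ∩ S₁.1).ncard = n - 1 ∧ (l ∩ S₂.1).ncard = 1) ∧
  (∀ l ∈ S₂.2, (l ∩ S₂.1).ncard = n - 1 ∧ (l ∩ S₁.1).ncard = 1) ∧
  (∀ p ∈ S₁.1, {l ∈ S₁.2 | p ∈ l}.ncard = n - 1 ∧ {l ∈ S₂.2 | p ∈ l}.ncard = 1) ∧
  (∀ p ∈ S₂.1, {l ∈ S₂.2 | p ∈ l}.ncard = n - 1 ∧ {l ∈ S₁.2 | p ∈ l}.ncard = 1)

/-- A special decomposition: one in which both simplices differ from S_A and S_B. -/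
def IsSpecialDecomp (n : ℕ) (φ : Equiv.Perm (Fin n)) (S₁ S₂ : MSimplex n) : Prop :=
  IsDecomp n φ S₁ S₂ ∧
  S₁ ≠ SimplexA n ∧ S₁ ≠ SimplexB n φ ∧ S₂ ≠ SimplexA n ∧ S₂ ≠ SimplexB n φ

namespace Moebius

open Finset

variable {n : ℕ} (φ : Equiv.Perm (Fin n))

def block : MPoint n → Finset (MPoint n)
  | .inl i => (univ.erase i).disjSum {i}
  | .inr i => disjSum {φ i} (univ.erase i)

@[simp]
theorem coe_block_inl (i : Fin n) : (block φ (.inl i) : Set (MPoint n)) = Ablock n i := by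
  ext (j | j) <;> simp [block, Ablock, eq_comm]

@[simp]
theorem coe_block_inr (i : Fin n) : (block φ (.inr i) : Set (MPoint n)) = Bblock n φ i := by
  ext (j | j) <;> simp [block, Bblock, eq_comm]

theorem range_coe_block :
    Set.range (fun i => (block φ i : Set (MPoint n))) = MBlocks n φ := by
  rw [Sum.range_eq]
  simp [Function.comp_def, MBlocks, ABlocks, BBlocks]

theorem block_injective (hn : 3 ≤ n) : Function.Injective (block φ) := by
  have hne : ∀ i j, (univ.erase i : Finset (Fin n)) ≠ {j} := fun i j h => by
    have := congrArg card h
    rw [card_erase_of_mem (mem_univ i), card_univ, Fintype.card_fin, card_singleton] at this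
    omega
  rintro (i | i) (j | j) h <;> simp only [block, disjSum_inj] at h
  · rw [singleton_inj.mp h.2]
  · exact (hne i (φ j) h.1).elim
  · exact (hne i j h.2).elim
  · rw [(erase_inj _ (mem_univ i)).mp h.2]

def simplex (P T : Finset (MPoint n)) : MSimplex n :=
  (P, (fun i => (block φ i : Set (MPoint n))) '' T)

theorem coe_block_injective (hn : 3 ≤ n) :
    Function.Injective (fun i => (block φ i : Set (MPoint n))) :=
  coe_injective.comp (block_injective φ hn)

theorem ncard_simplex_snd (hn : 3 ≤ n) (P T : Finset (MPoint n)) :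
    (simplex φ P T).2.ncard = #T := by
  rw [simplex, Set.ncard_image_of_injective _ (coe_block_injective φ hn), Set.ncard_coe_finset]

theorem sep_mem_simplex_snd (P T : Finset (MPoint n)) (p : MPoint n) :
    {l ∈ (simplex φ P T).2 | p ∈ l} = (simplex φ P {i ∈ T | p ∈ block φ i}).2 := by
  ext l
  constructor
  · rintro ⟨⟨i, hi, rfl⟩, hp⟩
    exact ⟨i, mem_filter.mpr ⟨hi, hp⟩, rfl⟩
  · rintro ⟨i, hi, rfl⟩
    obtain ⟨hi, hp⟩ := mem_filter.mp hi
    exact ⟨⟨i, hi, rfl⟩, hp⟩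

theorem ncard_inter_simplex_fst (P T : Finset (MPoint n)) (i : MPoint n) :
    ((block φ i : Set (MPoint n)) ∩ (simplex φ P T).1).ncard = #(block φ i ∩ P) := by
  rw [simplex, ← coe_inter, Set.ncard_coe_finset]

def IsFinsetDecomp (P T : Finset (MPoint n)) : Prop :=
  #P = n ∧ #T = n ∧
  (∀ i ∈ T, #(block φ i ∩ P) = n - 1 ∧ #(block φ i ∩ Pᶜ) = 1) ∧
  (∀ i ∈ Tᶜ, #(block φ i ∩ Pᶜ) = n - 1 ∧ #(block φ i ∩ P) = 1) ∧
  (∀ p ∈ P, #{i ∈ T | p ∈ block φ i} = n - 1 ∧ #{i ∈ Tᶜ | p ∈ block φ i} = 1) ∧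
  (∀ p ∈ Pᶜ, #{i ∈ Tᶜ | p ∈ block φ i} = n - 1 ∧ #{i ∈ T | p ∈ block φ i} = 1)

instance (P T : Finset (MPoint n)) : Decidable (IsFinsetDecomp φ P T) := by
  unfold IsFinsetDecomp; infer_instance

theorem isDecomp_simplex (hn : 3 ≤ n) {P T : Finset (MPoint n)} (h : IsFinsetDecomp φ P T) :
    IsDecomp n φ (simplex φ P T) (simplex φ Pᶜ Tᶜ) := by
  obtain ⟨hP, hT, hT₁, hT₂, hP₁, hP₂⟩ := h
  have hcompl : ∀ s : Finset (MPoint n), #s = n → #sᶜ = n := fun s hs => by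
    rw [card_compl, Fintype.card_sum, Fintype.card_fin, hs]; omega
  refine ⟨?_, ?_, ?_, ?_, ?_, ?_, ?_, ?_, ?_, ?_, ?_, ?_⟩
  · simp [simplex]
  · simp [simplex, disjoint_compl_right]
  · exact (Set.ncard_coe_finset P).trans hP
  · exact (Set.ncard_coe_finset Pᶜ).trans (hcompl P hP)
  · rw [simplex, simplex, ← Set.image_union, ← coe_union, union_compl, coe_univ, Set.image_univ,
      range_coe_block]
  · exact (Set.disjoint_image_iff (coe_block_injective φ hn)).mpr
      (disjoint_coe.mpr disjoint_compl_right)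
  · rwa [ncard_simplex_snd φ hn]
  · rw [ncard_simplex_snd φ hn]; exact hcompl T hT
  · rintro _ ⟨i, hi, rfl⟩
    simpa only [ncard_inter_simplex_fst] using hT₁ i hi
  · rintro _ ⟨i, hi, rfl⟩
    simpa only [ncard_inter_simplex_fst] using hT₂ i hi
  · intro p hp
    simpa only [sep_mem_simplex_snd, ncard_simplex_snd φ hn] using hP₁ p hp
  · intro p hp
    simpa only [sep_mem_simplex_snd, ncard_simplex_snd φ hn] using hP₂ p hp

def heavyBlocks (P : Finset (MPoint n)) : Finset (MPoint n) :=
  {i | #(block φ i ∩ P) = n - 1}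

theorem exists_eq_simplex_of_isDecomp (hn : 3 ≤ n) {S₁ S₂ : MSimplex n}
    (h : IsDecomp n φ S₁ S₂) :
    ∃ P : Finset (MPoint n), #P = n ∧
      (∀ i, #(block φ i ∩ P) = n - 1 ∨ #(block φ i ∩ P) = 1) ∧
      S₁ = simplex φ P (heavyBlocks φ P) ∧ S₂ = simplex φ Pᶜ (heavyBlocks φ P)ᶜ := by
  obtain ⟨hcov, hdisj, hcard, -, hbl, hbldisj, -, -, h₁, h₂, -, -⟩ := h
  obtain ⟨P, hP⟩ : ∃ P : Finset (MPoint n), ↑P = S₁.1 := ⟨S₁.1.toFinite.toFinset, by simp⟩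
  have hS₂ : S₂.1 = ↑Pᶜ := by
    rw [coe_compl, hP]
    exact (IsCompl.mk hdisj (codisjoint_iff.mpr hcov)).compl_eq.symm
  set f := fun i => (block φ i : Set (MPoint n))
  have hrange : S₁.2 ∪ S₂.2 = Set.range f := hbl.trans (range_coe_block φ).symm
  have hcount₁ : ∀ i, f i ∈ S₁.2 → #(block φ i ∩ P) = n - 1 := fun i hi => by
    simpa [f, ← hP, ← coe_inter] using (h₁ _ hi).1
  have hcount₂ : ∀ i, f i ∈ S₂.2 → #(block φ i ∩ P) = 1 := fun i hi => by
    simpa [f, ← hP, ← coe_inter] using (h₂ _ hi).2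
  have hsplit : ∀ i, f i ∈ S₁.2 ∨ f i ∈ S₂.2 := fun i => by
    rw [← Set.mem_union, hrange]; exact Set.mem_range_self i
  have hheavy : f ⁻¹' S₁.2 = ↑(heavyBlocks φ P) := by
    ext i
    simp only [Set.mem_preimage, heavyBlocks, coe_filter, mem_univ, true_and, Set.mem_ofPred_eq]
    refine ⟨hcount₁ i, fun hi => (hsplit i).resolve_right fun hi₂ => ?_⟩
    have := hcount₂ i hi₂
    omega
  have hlight : f ⁻¹' S₂.2 = ↑(heavyBlocks φ P)ᶜ := by
    rw [coe_compl, ← hheavy, ← Set.preimage_compl]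
    ext i
    exact ⟨fun hi₂ hi₁ => Set.disjoint_left.mp hbldisj hi₁ hi₂, (hsplit i).resolve_left⟩
  refine ⟨P, by rwa [← hP, Set.ncard_coe_finset] at hcard,
    fun i => (hsplit i).imp (hcount₁ i) (hcount₂ i), ?_, ?_⟩
  · refine Prod.ext hP.symm ?_
    rw [simplex, ← hheavy, Set.image_preimage_eq_of_subset (hrange ▸ Set.subset_union_left)]
  · refine Prod.ext hS₂ ?_
    rw [simplex, ← hlight, Set.image_preimage_eq_of_subset (hrange ▸ Set.subset_union_right)]

def transversal (I : Finset (Fin n)) : Finset (MPoint n) := I.disjSum Iᶜ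

theorem transversal_injective : Function.Injective (transversal (n := n)) :=
  fun _ _ h => (disjSum_inj.mp h).1

theorem compl_transversal (I : Finset (Fin n)) : (transversal I)ᶜ = transversal Iᶜ := by
  ext (i | i) <;> simp [transversal]

theorem simplexA_eq : SimplexA n = simplex φ (transversal univ) (transversal univ) := by
  refine Prod.ext ?_ ?_
  · ext (i | i) <;> simp [SimplexA, simplex, transversal]
  · simp [SimplexA, simplex, transversal, ABlocks, ← Set.range_comp, Function.comp_def]

theorem simplexB_eq : SimplexB n φ = simplex φ (transversal ∅) (transversal ∅) := by
  refine Prod.ext ?_ ?_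
  · ext (i | i) <;> simp [SimplexB, simplex, transversal]
  · simp [SimplexB, simplex, transversal, BBlocks, ← Set.range_comp, Function.comp_def]

def transversalSimplex (I : Finset (Fin n)) : MSimplex n :=
  simplex φ (transversal I) (transversal Iᶜ)

theorem transversalSimplex_injective : Function.Injective (transversalSimplex φ) :=
  fun _ _ h => transversal_injective (coe_inj.mp (congrArg Prod.fst h))

theorem transversalSimplex_ne_simplexA {I : Finset (Fin n)} (hI : I ≠ univ) :
    transversalSimplex φ I ≠ SimplexA n := by
  rw [simplexA_eq φ]
  exact fun h => hI (transversal_injective (coe_inj.mp (congrArg Prod.fst h)))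

theorem transversalSimplex_ne_simplexB {I : Finset (Fin n)} (hI : I ≠ ∅) :
    transversalSimplex φ I ≠ SimplexB n φ := by
  rw [simplexB_eq φ]
  exact fun h => hI (transversal_injective (coe_inj.mp (congrArg Prod.fst h)))

def decompPair (I : Finset (Fin n)) : Set (MSimplex n) :=
  {transversalSimplex φ I, transversalSimplex φ Iᶜ}

theorem decompPair_compl (I : Finset (Fin n)) : decompPair φ Iᶜ = decompPair φ I := by
  rw [decompPair, decompPair, compl_compl, Set.pair_comm]

theorem decompPair_injOn (a : Fin n) : Set.InjOn (decompPair φ) {I | a ∈ I} := by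
  intro I hI J hJ h
  have hmem : transversalSimplex φ I ∈ decompPair φ J := h ▸ Set.mem_insert _ _
  rcases hmem with hIJ | hIJ
  · exact transversalSimplex_injective φ hIJ
  · exact absurd hJ (mem_compl.mp (transversalSimplex_injective φ hIJ ▸ hI))

set_option maxRecDepth 4000 in
theorem eq_transversal_of_card_block_inter {P : Finset (MPoint 4)} (hP : #P = 4)
    (h : ∀ i, #(block 1 i ∩ P) = 3 ∨ #(block 1 i ∩ P) = 1) :
    ∃ I, Even #I ∧ P = transversal I := by
  revert P; decide

theorem heavyBlocks_transversal {I : Finset (Fin 4)} (hI : #I = 2) :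
    heavyBlocks 1 (transversal I) = transversal Iᶜ := by
  revert I; decide

theorem heavyBlocks_transversal_univ :
    heavyBlocks 1 (transversal (univ : Finset (Fin 4))) = transversal univ := by
  decide

theorem heavyBlocks_transversal_empty :
    heavyBlocks 1 (transversal (∅ : Finset (Fin 4))) = transversal ∅ := by
  decide

theorem isFinsetDecomp_transversal {I : Finset (Fin 4)} (hI : #I = 2) :
    IsFinsetDecomp 1 (transversal I) (transversal Iᶜ) := by
  revert I; decide

theorem exists_transversalSimplex_of_isSpecialDecomp {S₁ S₂ : MSimplex 4}
    (h : IsSpecialDecomp 4 1 S₁ S₂) :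
    ∃ I : Finset (Fin 4), #I = 2 ∧ S₁ = transversalSimplex 1 I ∧ S₂ = transversalSimplex 1 Iᶜ := by
  obtain ⟨hD, hA, hB, -, -⟩ := h
  obtain ⟨P, hP, hblocks, rfl, rfl⟩ := exists_eq_simplex_of_isDecomp 1 (by norm_num) hD
  obtain ⟨I, ⟨k, hk⟩, rfl⟩ := eq_transversal_of_card_block_inter hP hblocks
  have hI : #I ≤ 4 := card_le_univ I
  obtain h0 | h2 | h4 : #I = 0 ∨ #I = 2 ∨ #I = 4 := by omega
  · rw [card_eq_zero.mp h0, heavyBlocks_transversal_empty, ← simplexB_eq] at hB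
    exact (hB rfl).elim
  · refine ⟨I, h2, ?_, ?_⟩
    · rw [transversalSimplex, heavyBlocks_transversal h2]
    · rw [transversalSimplex, heavyBlocks_transversal h2, compl_transversal, compl_transversal,
        compl_compl]
  · rw [(card_eq_iff_eq_univ I).mp h4, heavyBlocks_transversal_univ, ← simplexA_eq] at hA
    exact (hA rfl).elim

theorem isSpecialDecomp_transversalSimplex {I : Finset (Fin 4)} (hI : #I = 2) :
    IsSpecialDecomp 4 1 (transversalSimplex 1 I) (transversalSimplex 1 Iᶜ) := by
  have hne : ∀ J : Finset (Fin 4), #J = 2 →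
      transversalSimplex 1 J ≠ SimplexA 4 ∧ transversalSimplex 1 J ≠ SimplexB 4 1 :=
    fun J hJ => ⟨transversalSimplex_ne_simplexA 1 (by rintro rfl; simp at hJ),
      transversalSimplex_ne_simplexB 1 (by rintro rfl; simp at hJ)⟩
  have hIc : #Iᶜ = 2 := by rw [card_compl, Fintype.card_fin, hI]
  have hD := isDecomp_simplex 1 (by norm_num) (isFinsetDecomp_transversal hI)
  rw [compl_transversal, compl_transversal] at hD
  exact ⟨hD, (hne I hI).1, (hne I hI).2, (hne Iᶜ hIc).1, (hne Iᶜ hIc).2⟩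

theorem specialDecomps_eq :
    {D : Set (MSimplex 4) | ∃ S₁ S₂ : MSimplex 4, IsSpecialDecomp 4 1 S₁ S₂ ∧ D = {S₁, S₂}} =
      decompPair 1 '' {I | 0 ∈ I ∧ #I = 2} := by
  ext D
  simp only [Set.mem_ofPred_eq, Set.mem_image]
  constructor
  · rintro ⟨_, _, h, rfl⟩
    obtain ⟨I, hI, rfl, rfl⟩ := exists_transversalSimplex_of_isSpecialDecomp h
    by_cases h0 : 0 ∈ I
    · exact ⟨I, ⟨h0, hI⟩, rfl⟩
    · refine ⟨Iᶜ, ⟨mem_compl.mpr h0, by rw [card_compl, Fintype.card_fin, hI]⟩, ?_⟩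
      exact decompPair_compl 1 I
  · rintro ⟨I, ⟨-, hI⟩, rfl⟩
    exact ⟨_, _, isSpecialDecomp_transversalSimplex hI, rfl⟩

end Moebius

/-- 𝔐_{(4,id)} admits exactly 3 special decompositions, counted as unordered pairs
of simplices. -/
theorem stmt4 :
    {D : Set (MSimplex 4) |
      ∃ S₁ S₂ : MSimplex 4, IsSpecialDecomp 4 1 S₁ S₂ ∧ D = {S₁, S₂}}.ncard = 3 := by
  rw [Moebius.specialDecomps_eq,
    ((Moebius.decompPair_injOn 1 0).mono fun _ hI => hI.1).ncard_image, Set.ncard_eq_toFinset_card']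
  decide
end

section
/- Let n ≥ 4, let φ be a permutation of I = {1,…,n}, and let S_1, S_2 be the two simplices of a special decomposition of 𝔐_{(n,φ)}. Then for each i ∈ I and each t = 1,2, the simplex S_t does not contain both the block B_i and the point b_i, and does not contain both the block A_i and the point a_i. -/
/-!
If `B_i` and `b_i` both belong to the simplex `(P, L)`, then `P` is `b_i` together with the
`n - 1` points of `P` on `B_i`, so `P ⊆ B ∪ {a_{φ i}}`. An `A`-block then meets `P` in at most
two points, fewer than `n - 1` once `n ≥ 4`, so `L` consists of `B`-blocks and is all of them.
The point `a_{φ i}` lies on the single `B`-block `B_i`, not on `n - 1` of them, so it is not in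
`P`; hence `P = B` and the simplex is `S_B`. The case of `A_i` and `a_i` is symmetric.
-/

open Set

theorem Set.subset_insert_of_ncard_inter_add_one {α : Type*} {P ℓ : Set α} {p : α}
    (hp : p ∈ P) (hpℓ : p ∉ ℓ) (h : (ℓ ∩ P).ncard + 1 = P.ncard) : P ⊆ insert p ℓ := by
  have hP : P.Finite := finite_of_ncard_pos (by omega)
  have hP_eq : insert p (ℓ ∩ P) = P := by
    refine eq_of_subset_of_ncard_le (insert_subset hp inter_subset_right) ?_ hP
    rw [ncard_insert_of_notMem (fun h => hpℓ h.1) (hP.subset inter_subset_right)]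
    omega
  calc P = insert p (ℓ ∩ P) := hP_eq.symm
    _ ⊆ insert p ℓ := insert_subset_insert inter_subset_left

theorem eq_of_subset_insert_of_inscribed {α : Type*} {n : ℕ} (hn : 4 ≤ n)
    {P Q : Set α} {L 𝓧 𝓨 : Set (Set α)} {c : α}
    (hP : P.ncard = n) (hL : L.ncard = n) (hL𝓧𝓨 : L ⊆ 𝓧 ∪ 𝓨)
    (hLP : ∀ l ∈ L, (l ∩ P).ncard = n - 1) (hPL : ∀ p ∈ P, {l ∈ L | p ∈ l}.ncard = n - 1)
    (hQ : Q.ncard = n) (h𝓨 : 𝓨.ncard = n) (h𝓧Q : ∀ X ∈ 𝓧, (X ∩ Q).ncard ≤ 1)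
    (hc𝓨 : {l ∈ 𝓨 | c ∈ l}.ncard ≤ 1) (hPQ : P ⊆ insert c Q) : P = Q ∧ L = 𝓨 := by
  have hQfin : Q.Finite := finite_of_ncard_pos (by omega)
  have hL𝓨 : L = 𝓨 := by
    refine eq_of_subset_of_ncard_le (fun l hl => ?_) (by omega) (finite_of_ncard_pos (by omega))
    refine (hL𝓧𝓨 hl).resolve_left fun hl𝓧 => ?_
    have hlP : (l ∩ P).ncard ≤ 2 :=
      calc (l ∩ P).ncard ≤ (insert c (l ∩ Q)).ncard := by
            refine ncard_le_ncard (fun x hx => ?_) ((hQfin.subset inter_subset_right).insert c)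
            exact (hPQ hx.2).imp id fun hxQ => ⟨hx.1, hxQ⟩
        _ ≤ (l ∩ Q).ncard + 1 := ncard_insert_le _ _
        _ ≤ 2 := by linarith [h𝓧Q l hl𝓧]
    have := hLP l hl
    omega
  have hcP : c ∉ P := fun hc => by
    have := hPL c hc
    rw [hL𝓨] at this
    omega
  have hPQ' : P ⊆ Q := fun x hx => (hPQ hx).resolve_left fun hxc => hcP (hxc ▸ hx)
  exact ⟨eq_of_subset_of_ncard_le hPQ' (by omega) hQfin, hL𝓨⟩

section MobiusPair

variable {n : ℕ} (φ : Equiv.Perm (Fin n)) (i : Fin n)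

theorem ncard_range_inl : (range (Sum.inl : Fin n → MPoint n)).ncard = n := by
  rw [ncard_range_of_injective Sum.inl_injective, Nat.card_fin]

theorem ncard_range_inr : (range (Sum.inr : Fin n → MPoint n)).ncard = n := by
  rw [ncard_range_of_injective Sum.inr_injective, Nat.card_fin]

theorem Ablock_injective : Function.Injective (Ablock n) := fun i j h => by
  have : Sum.inr i ∈ Ablock n j := h ▸ by simp [Ablock]
  simpa [Ablock] using this

theorem Bblock_injective : Function.Injective (Bblock n φ) := fun i j h => by
  have : Sum.inl (φ i) ∈ Bblock n φ j := h ▸ by simp [Bblock]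
  simpa [Bblock] using this

theorem ncard_ABlocks : (ABlocks n).ncard = n := by
  rw [ABlocks, ncard_range_of_injective Ablock_injective, Nat.card_fin]

theorem ncard_BBlocks : (BBlocks n φ).ncard = n := by
  rw [BBlocks, ncard_range_of_injective (Bblock_injective φ), Nat.card_fin]

theorem Ablock_inter_range_inr : Ablock n i ∩ range Sum.inr = {Sum.inr i} := by
  ext (x | x) <;> simp [Ablock]

theorem Bblock_inter_range_inl : Bblock n φ i ∩ range Sum.inl = {Sum.inl (φ i)} := by
  ext (x | x) <;> simp [Bblock]

theorem sep_ABlocks_inr_mem : {l ∈ ABlocks n | Sum.inr i ∈ l} = {Ablock n i} := by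
  ext l
  simp only [ABlocks, mem_range, mem_singleton_iff]
  constructor
  · rintro ⟨⟨j, rfl⟩, hij⟩
    simp_all [Ablock]
  · rintro rfl
    simp [Ablock]

theorem sep_BBlocks_inl_mem : {l ∈ BBlocks n φ | Sum.inl (φ i) ∈ l} = {Bblock n φ i} := by
  ext l
  simp only [BBlocks, mem_range, mem_singleton_iff]
  constructor
  · rintro ⟨⟨j, rfl⟩, hij⟩
    simp_all [Bblock]
  · rintro rfl
    simp [Bblock]

theorem insert_inl_Ablock_subset :
    insert (Sum.inl i) (Ablock n i) ⊆ insert (Sum.inr i) (range Sum.inl) := by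
  rintro (x | x) <;> simp [Ablock]

theorem insert_inr_Bblock_subset :
    insert (Sum.inr i) (Bblock n φ i) ⊆ insert (Sum.inl (φ i)) (range Sum.inr) := by
  rintro (x | x) <;> simp [Bblock]

variable {φ i} {S₁ S₂ : MSimplex n}

theorem IsDecomp.symm (hd : IsDecomp n φ S₁ S₂) : IsDecomp n φ S₂ S₁ := by
  obtain ⟨h1, h2, h3, h4, h5, h6, h7, h8, h9, h10, h11, h12⟩ := hd
  exact ⟨by rwa [union_comm], h2.symm, h4, h3, by rwa [union_comm], h6.symm, h8, h7,
    h10, h9, h12, h11⟩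

theorem IsDecomp.eq_simplexB_of_mem (hn : 4 ≤ n) (hd : IsDecomp n φ S₁ S₂)
    (hB : Bblock n φ i ∈ S₁.2) (hb : Sum.inr i ∈ S₁.1) : S₁ = SimplexB n φ := by
  obtain ⟨-, -, hP, -, hL, -, hLc, -, hLP, -, hPL, -⟩ := hd
  have hPQ : S₁.1 ⊆ insert (Sum.inl (φ i)) (range Sum.inr) :=
    (subset_insert_of_ncard_inter_add_one hb (by simp [Bblock])
      (by rw [(hLP _ hB).1, hP]; omega)).trans (insert_inr_Bblock_subset φ i)
  obtain ⟨hP_eq, hL_eq⟩ := eq_of_subset_insert_of_inscribed hn hP hLc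
    (subset_union_left.trans hL.subset) (fun l hl => (hLP l hl).1) (fun p hp => (hPL p hp).1)
    ncard_range_inr (ncard_BBlocks φ)
    (by rintro _ ⟨j, rfl⟩; simp [Ablock_inter_range_inr]) (by simp [sep_BBlocks_inl_mem]) hPQ
  exact Prod.ext hP_eq hL_eq

theorem IsDecomp.eq_simplexA_of_mem (hn : 4 ≤ n) (hd : IsDecomp n φ S₁ S₂)
    (hA : Ablock n i ∈ S₁.2) (ha : Sum.inl i ∈ S₁.1) : S₁ = SimplexA n := by
  obtain ⟨-, -, hP, -, hL, -, hLc, -, hLP, -, hPL, -⟩ := hd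
  have hPQ : S₁.1 ⊆ insert (Sum.inr i) (range Sum.inl) :=
    (subset_insert_of_ncard_inter_add_one ha (by simp [Ablock])
      (by rw [(hLP _ hA).1, hP]; omega)).trans (insert_inl_Ablock_subset i)
  obtain ⟨hP_eq, hL_eq⟩ := eq_of_subset_insert_of_inscribed hn hP hLc
    ((subset_union_left.trans hL.subset).trans (union_comm _ _).subset)
    (fun l hl => (hLP l hl).1) (fun p hp => (hPL p hp).1) ncard_range_inl ncard_ABlocks
    (by rintro _ ⟨j, rfl⟩; simp [Bblock_inter_range_inl]) (by simp [sep_ABlocks_inr_mem]) hPQ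
  exact Prod.ext hP_eq hL_eq

end MobiusPair

/-- In a special decomposition, no simplex contains both B_i and b_i, nor both A_i and a_i. -/
theorem stmt5 (n : ℕ) (hn : 4 ≤ n) (φ : Equiv.Perm (Fin n)) (S₁ S₂ : MSimplex n)
    (h : IsSpecialDecomp n φ S₁ S₂) (i : Fin n) :
    ¬(Bblock n φ i ∈ S₁.2 ∧ Sum.inr i ∈ S₁.1) ∧
    ¬(Bblock n φ i ∈ S₂.2 ∧ Sum.inr i ∈ S₂.1) ∧
    ¬(Ablock n i ∈ S₁.2 ∧ Sum.inl i ∈ S₁.1) ∧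
    ¬(Ablock n i ∈ S₂.2 ∧ Sum.inl i ∈ S₂.1) := by
  obtain ⟨hd, hA₁, hB₁, hA₂, hB₂⟩ := h
  exact ⟨fun ⟨hB, hb⟩ => hB₁ (hd.eq_simplexB_of_mem hn hB hb),
    fun ⟨hB, hb⟩ => hB₂ (hd.symm.eq_simplexB_of_mem hn hB hb),
    fun ⟨hA, ha⟩ => hA₁ (hd.eq_simplexA_of_mem hn hA ha),
    fun ⟨hA, ha⟩ => hA₂ (hd.symm.eq_simplexA_of_mem hn hA ha)⟩
end

section
/- For n ≥ 4, the number of isomorphism classes of Möbius n-pairs 𝔐_{(n,φ)}, where φ ranges over all permutations of {1,…,n}, equals the number p(n) of partitions of the positive integer n. -/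
/-- Two Möbius n-pairs are isomorphic configurations. -/
def MIso (n : ℕ) (φ ψ : Equiv.Perm (Fin n)) : Prop :=
  ∃ f : MPoint n ≃ MPoint n,
    ∀ S : Set (MPoint n), S ∈ MBlocks n φ ↔ ⇑f '' S ∈ MBlocks n ψ

/-!
An isomorphism of Möbius pairs relabels the blocks so that the sizes of pairwise intersections
are preserved: two blocks of the same side meet in `n - 2` points, blocks `A_i`, `B_j` in
`[φ j ≠ i] + [i ≠ j] ≤ 2` points. For `n ≥ 5` an isomorphism therefore sends all A-blocks to
one side; composing with the automorphism `a_k ↦ b_k, b_k ↦ a_{φ k}` that exchanges the sides we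
may assume it is the A-side, and then the isomorphism is forced to be
`a_k ↦ a_{σ k}, b_k ↦ b_{σ k}` with `σ φ = ψ σ`. For `n = 4` isomorphisms mixing the sides do
exist. Instead, the graph joining two blocks that share at most one point is an invariant: it
consists of a `2ℓ`-cycle for every `ℓ`-cycle of `φ` with `ℓ ≥ 2` and an edge for every fixed
point, and its number of closed walks of length 4 already separates the five conjugacy classes
of `S₄`. Since conjugate permutations clearly give isomorphic pairs, isomorphism classes are
conjugacy classes of `S_n`, which correspond to partitions of `n` through cycle types.
-/

open Equiv Function

lemma Equiv.Perm.isConj_iff_exists_comp_eq {α : Type*} {φ ψ : Perm α} :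
    IsConj φ ψ ↔ ∃ σ : Perm α, ∀ k, σ (φ k) = ψ (σ k) := by
  simp only [isConj_iff, mul_inv_eq_iff_eq_mul, Equiv.ext_iff, Perm.mul_apply]

lemma Set.ncard_eq_ncard_preimage_inl_add {α β : Type*} [Finite α] [Finite β] (S : Set (α ⊕ β)) :
    S.ncard = (Sum.inl ⁻¹' S).ncard + (Sum.inr ⁻¹' S).ncard := by
  conv_lhs => rw [← Set.image_preimage_inl_union_image_preimage_inr S]
  rw [Set.ncard_union_eq Set.disjoint_image_inl_image_inr,
    Set.ncard_image_of_injective _ Sum.inl_injective,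
    Set.ncard_image_of_injective _ Sum.inr_injective]

lemma Set.ncard_singleton_sdiff_singleton {α : Type*} [DecidableEq α] (a b : α) :
    ({a} \ {b} : Set α).ncard = if a = b then 0 else 1 := by
  split_ifs with h
  · simp [h]
  · rw [Set.sdiff_singleton_eq_self (Set.mem_singleton_iff.not.2 (Ne.symm h)), Set.ncard_singleton]

lemma Fin.ncard_compl_singleton {n : ℕ} (i : Fin n) : ({i}ᶜ : Set (Fin n)).ncard = n - 1 := by
  rw [Set.ncard_compl, Set.ncard_singleton, Nat.card_eq_fintype_card, Fintype.card_fin]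

lemma Fin.ncard_compl_inter_compl {n : ℕ} {i j : Fin n} (hij : i ≠ j) :
    ({i}ᶜ ∩ {j}ᶜ : Set (Fin n)).ncard = n - 2 := by
  rw [← Set.compl_union, Set.ncard_compl, Set.union_singleton, Set.ncard_pair hij.symm,
    Nat.card_eq_fintype_card, Fintype.card_fin]

lemma Fin.exists_ne_ne_of_two_lt {n : ℕ} (hn : 2 < n) (k : Fin n) :
    ∃ i j : Fin n, i ≠ j ∧ i ≠ k ∧ j ≠ k := by
  obtain ⟨i, hik, -⟩ := Fin.exists_ne_and_ne_of_two_lt k k hn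
  obtain ⟨j, hjk, hji⟩ := Fin.exists_ne_and_ne_of_two_lt k i hn
  exact ⟨i, j, hji.symm, hik, hjk⟩

lemma Matrix.trace_pow_submatrix_equiv {α R : Type*} [Fintype α] [DecidableEq α] [CommSemiring R]
    (A : Matrix α α R) (e : α ≃ α) (k : ℕ) :
    ((A.submatrix e e) ^ k).trace = (A ^ k).trace := by
  have hpow : (A.submatrix e e) ^ k = (A ^ k).submatrix e e := by
    induction k with
    | zero => simp
    | succ k ih => rw [pow_succ, pow_succ, ih, Matrix.submatrix_mul_equiv]
  rw [hpow]
  exact Equiv.sum_comp e fun x => (A ^ k) x x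

namespace MobiusPair

variable {n : ℕ} {φ ψ : Perm (Fin n)}

@[simp] lemma inl_mem_Ablock {i j : Fin n} : Sum.inl j ∈ Ablock n i ↔ j ≠ i := by simp [Ablock]

@[simp] lemma inr_mem_Ablock {i j : Fin n} : Sum.inr j ∈ Ablock n i ↔ j = i := by simp [Ablock]

@[simp] lemma inl_mem_Bblock {i j : Fin n} : Sum.inl j ∈ Bblock n φ i ↔ j = φ i := by
  simp [Bblock]

@[simp] lemma inr_mem_Bblock {i j : Fin n} : Sum.inr j ∈ Bblock n φ i ↔ j ≠ i := by
  simp [Bblock]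

lemma Ablock_injective : Injective (Ablock n) := fun i j h => by
  simpa [h] using (show Sum.inr i ∈ Ablock n i by simp)

def block (n : ℕ) (φ : Perm (Fin n)) : Fin n ⊕ Fin n → Set (MPoint n) :=
  Sum.elim (Ablock n) (Bblock n φ)

@[simp] lemma block_inl (i : Fin n) : block n φ (.inl i) = Ablock n i := rfl

@[simp] lemma block_inr (i : Fin n) : block n φ (.inr i) = Bblock n φ i := rfl

lemma MBlocks_eq_range_block : MBlocks n φ = Set.range (block n φ) := by
  rw [block, Set.Sum.elim_range]; rfl

def blockMeet (φ : Perm (Fin n)) : Fin n ⊕ Fin n → Fin n ⊕ Fin n → ℕ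
  | .inl i, .inl j => if i = j then n else n - 2
  | .inr i, .inr j => if i = j then n else n - 2
  | .inl i, .inr j => (if φ j = i then 0 else 1) + (if i = j then 0 else 1)
  | .inr j, .inl i => (if φ j = i then 0 else 1) + (if i = j then 0 else 1)

@[simp] lemma preimage_inl_Ablock (i : Fin n) : Sum.inl ⁻¹' Ablock n i = {i}ᶜ := by ext; simp

@[simp] lemma preimage_inr_Ablock (i : Fin n) : Sum.inr ⁻¹' Ablock n i = {i} := by ext; simp

@[simp] lemma preimage_inl_Bblock (i : Fin n) : Sum.inl ⁻¹' Bblock n φ i = {φ i} := by ext; simp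

@[simp] lemma preimage_inr_Bblock (i : Fin n) : Sum.inr ⁻¹' Bblock n φ i = {i}ᶜ := by ext; simp

lemma ncard_block_inter (x y : Fin n ⊕ Fin n) :
    (block n φ x ∩ block n φ y).ncard = blockMeet φ x y := by
  rw [Set.ncard_eq_ncard_preimage_inl_add]
  rcases x with i | i <;> rcases y with j | j <;>
    simp only [blockMeet, block_inl, block_inr, Set.preimage_inter, preimage_inl_Ablock,
      preimage_inr_Ablock, preimage_inl_Bblock, preimage_inr_Bblock]
  · rcases eq_or_ne i j with rfl | hij
    · have := i.pos
      simp only [Set.inter_self, Fin.ncard_compl_singleton, Set.ncard_singleton, if_true]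
      omega
    · simp [hij, Fin.ncard_compl_inter_compl hij]
  · rw [Set.inter_comm, ← Set.sdiff_eq, ← Set.sdiff_eq, Set.ncard_singleton_sdiff_singleton,
      Set.ncard_singleton_sdiff_singleton]
  · rw [Set.inter_comm {i}ᶜ, ← Set.sdiff_eq, ← Set.sdiff_eq, Set.ncard_singleton_sdiff_singleton,
      Set.ncard_singleton_sdiff_singleton]
  · rcases eq_or_ne i j with rfl | hij
    · have := i.pos
      simp only [Set.inter_self, Fin.ncard_compl_singleton, Set.ncard_singleton, if_true]
      omega
    · simp [hij, Fin.ncard_compl_inter_compl hij]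

lemma ncard_Ablock_inter_Bblock_le_two (i j : Fin n) : (Ablock n i ∩ Bblock n φ j).ncard ≤ 2 := by
  rw [← block_inl (φ := φ), ← block_inr, ncard_block_inter, blockMeet]
  split_ifs <;> omega

lemma sub_two_le_ncard_Ablock_inter_Ablock (i j : Fin n) :
    n - 2 ≤ (Ablock n i ∩ Ablock n j).ncard := by
  rw [← block_inl (φ := 1), ← block_inl (φ := 1), ncard_block_inter, blockMeet]
  split_ifs <;> omega

lemma blockMeet_lt_of_ne (hn : 3 ≤ n) {x y : Fin n ⊕ Fin n} (hxy : x ≠ y) :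
    blockMeet φ x y < n := by
  rcases x with i | i <;> rcases y with j | j <;> simp only [blockMeet] <;> split_ifs <;>
    simp_all <;> omega

lemma block_injective (hn : 3 ≤ n) : Injective (block n φ) := by
  intro x y hxy
  by_contra hne
  have hself : blockMeet φ x x = n := by rcases x <;> simp [blockMeet]
  have := blockMeet_lt_of_ne (φ := φ) hn hne
  rw [← ncard_block_inter, ← hxy, ncard_block_inter, hself] at this
  exact this.false

lemma exists_perm_block_eq_image (hn : 3 ≤ n) (f : MPoint n ≃ MPoint n)
    (hf : ∀ S ∈ MBlocks n φ, ⇑f '' S ∈ MBlocks n ψ) :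
    ∃ g : Perm (Fin n ⊕ Fin n), ∀ x, block n ψ (g x) = ⇑f '' block n φ x := by
  have hg : ∀ x, ∃ y, block n ψ y = ⇑f '' block n φ x := fun x => by
    simpa [MBlocks_eq_range_block] using hf (block n φ x) (by simp [MBlocks_eq_range_block])
  choose g hg using hg
  have hinj : Injective g := fun x y hxy =>
    block_injective hn (Set.image_injective.2 f.injective (by rw [← hg, ← hg, hxy]))
  exact ⟨Equiv.ofBijective g (Finite.injective_iff_bijective.1 hinj), hg⟩

lemma eq_inl_of_not_mem_Ablock {p : MPoint n} {s u t : Fin n} (hsu : s ≠ u)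
    (hs : p ∈ Ablock n s) (hu : p ∈ Ablock n u) (ht : p ∉ Ablock n t) : p = .inl t := by
  rcases p with k | k
  · simpa using ht
  · simp only [inr_mem_Ablock] at hs hu
    exact absurd (hs.symm.trans hu) hsu

lemma isConj_of_image_Ablock_mem (hn : 3 ≤ n) (f : MPoint n ≃ MPoint n)
    (hf : ∀ S ∈ MBlocks n φ, ⇑f '' S ∈ MBlocks n ψ) (hA : ∀ i, ⇑f '' Ablock n i ∈ ABlocks n) :
    IsConj φ ψ := by
  choose σ hσ using hA
  have hmem : ∀ p i, f p ∈ Ablock n (σ i) ↔ p ∈ Ablock n i := fun p i => by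
    rw [hσ, f.injective.mem_set_image]
  have hσinj : Injective σ := fun i j hij =>
    Ablock_injective (Set.image_injective.2 f.injective (by rw [← hσ, ← hσ, hij]))
  have hσbij : Bijective σ := Finite.injective_iff_bijective.1 hσinj
  have hfa : ∀ k, f (.inl k) = .inl (σ k) := fun k => by
    obtain ⟨i, j, hij, hik, hjk⟩ := Fin.exists_ne_ne_of_two_lt hn k
    exact eq_inl_of_not_mem_Ablock (hσinj.ne hij) ((hmem _ _).2 (by simpa using hik.symm))
      ((hmem _ _).2 (by simpa using hjk.symm)) (by simp [hmem])
  have hfb : ∀ k, f (.inr k) = .inr (σ k) := fun k => by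
    have hk : f (.inr k) ∈ Ablock n (σ k) := (hmem _ _).2 (by simp)
    rcases hfk : f (.inr k) with m | m
    · obtain ⟨m, rfl⟩ := hσbij.2 m
      rw [← hfa] at hfk
      exact absurd (f.injective hfk) Sum.inr_ne_inl
    · rw [hfk] at hk
      simpa using hk
  refine Perm.isConj_iff_exists_comp_eq.2 ⟨Equiv.ofBijective σ hσbij, fun k => ?_⟩
  rcases hf _ (Or.inr ⟨k, rfl⟩) with ⟨t, ht⟩ | ⟨t, ht⟩
  · obtain ⟨i, j, hij, hik, hjk⟩ := Fin.exists_ne_ne_of_two_lt hn k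
    have hi : f (.inr i) ∈ Ablock n t := ht ▸ Set.mem_image_of_mem f (by simpa using hik)
    have hj : f (.inr j) ∈ Ablock n t := ht ▸ Set.mem_image_of_mem f (by simpa using hjk)
    simp only [hfb, inr_mem_Ablock] at hi hj
    exact absurd (hσinj (hi.trans hj.symm)) hij
  · have hmemB : ∀ p, f p ∈ Bblock n ψ t ↔ p ∈ Bblock n φ k := fun p => by
      rw [ht, f.injective.mem_set_image]
    have hkt : σ k = t := by simpa [hfb] using hmemB (.inr k)
    have hφk : σ (φ k) = ψ t := by simpa [hfa] using hmemB (.inl (φ k))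
    rw [ofBijective_apply, ofBijective_apply, hφk, hkt]

lemma forall_image_Ablock_mem_or (hn : 5 ≤ n) (f : MPoint n ≃ MPoint n)
    (hf : ∀ S ∈ MBlocks n φ, ⇑f '' S ∈ MBlocks n ψ) :
    (∀ i, ⇑f '' Ablock n i ∈ ABlocks n) ∨ ∀ i, ⇑f '' Ablock n i ∈ BBlocks n ψ := by
  by_contra! ⟨⟨i, hi⟩, ⟨j, hj⟩⟩
  obtain ⟨s, hs⟩ := (hf _ (Or.inl ⟨i, rfl⟩)).resolve_left hi
  obtain ⟨t, ht⟩ := (hf _ (Or.inl ⟨j, rfl⟩)).resolve_right hj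
  have hcross := ncard_Ablock_inter_Bblock_le_two (φ := ψ) t s
  rw [ht, hs, ← Set.image_inter f.injective, Set.ncard_image_of_injective _ f.injective] at hcross
  have := sub_two_le_ncard_Ablock_inter_Ablock (n := n) j i
  omega

def sideSwap (φ : Perm (Fin n)) : MPoint n ≃ MPoint n :=
  (Equiv.sumCongr (Equiv.refl _) φ).trans (Equiv.sumComm _ _)

lemma sideSwap_image_Ablock (i : Fin n) : sideSwap φ '' Ablock n i = Bblock n φ i := by
  rw [Equiv.image_eq_preimage_symm]
  ext (k | k) <;> simp [sideSwap, Equiv.eq_symm_apply, eq_comm]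

lemma sideSwap_image_Bblock (i : Fin n) : sideSwap φ '' Bblock n φ i = Ablock n (φ i) := by
  rw [Equiv.image_eq_preimage_symm]
  ext (k | k) <;> simp [sideSwap, Equiv.eq_symm_apply, eq_comm]

lemma sideSwap_image_mem_MBlocks {S : Set (MPoint n)} (hS : S ∈ MBlocks n φ) :
    sideSwap φ '' S ∈ MBlocks n φ := by
  rcases hS with ⟨i, rfl⟩ | ⟨i, rfl⟩
  · exact Or.inr ⟨i, (sideSwap_image_Ablock i).symm⟩
  · exact Or.inl ⟨φ i, (sideSwap_image_Bblock i).symm⟩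

theorem isConj_of_MIso_of_five_le (hn : 5 ≤ n) (h : MIso n φ ψ) : IsConj φ ψ := by
  obtain ⟨f, hf⟩ := h
  have hf' : ∀ S ∈ MBlocks n φ, ⇑f '' S ∈ MBlocks n ψ := fun S hS => (hf S).1 hS
  rcases forall_image_Ablock_mem_or hn f hf' with hA | hB
  · exact isConj_of_image_Ablock_mem (by omega) f hf' hA
  · refine isConj_of_image_Ablock_mem (by omega) (f.trans (sideSwap ψ)) (fun S hS => ?_) fun i => ?_
    · rw [coe_trans, Set.image_comp]
      exact sideSwap_image_mem_MBlocks (hf' S hS)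
    · obtain ⟨t, ht⟩ := hB i
      rw [coe_trans, Set.image_comp, ← ht, sideSwap_image_Bblock]
      exact ⟨_, rfl⟩

def meetLeOneAdjMatrix (φ : Perm (Fin n)) : Matrix (Fin n ⊕ Fin n) (Fin n ⊕ Fin n) ℕ :=
  Matrix.of fun x y => if blockMeet φ x y ≤ 1 then 1 else 0

lemma exists_conj_of_trace_meetLeOneAdjMatrix_pow_four_eq :
    ∀ φ ψ : Perm (Fin 4), (meetLeOneAdjMatrix φ ^ 4).trace = (meetLeOneAdjMatrix ψ ^ 4).trace →
      ∃ σ : Perm (Fin 4), σ * φ * σ⁻¹ = ψ := by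
  decide +kernel

theorem isConj_of_MIso_four {φ ψ : Perm (Fin 4)} (h : MIso 4 φ ψ) : IsConj φ ψ := by
  obtain ⟨f, hf⟩ := h
  obtain ⟨g, hg⟩ := exists_perm_block_eq_image (by norm_num) f fun S hS => (hf S).1 hS
  have hmeet : ∀ x y, blockMeet ψ (g x) (g y) = blockMeet φ x y := fun x y => by
    rw [← ncard_block_inter, ← ncard_block_inter, hg, hg, ← Set.image_inter f.injective,
      Set.ncard_image_of_injective _ f.injective]
  have hadj : (meetLeOneAdjMatrix ψ).submatrix g g = meetLeOneAdjMatrix φ := by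
    ext x y
    simp [meetLeOneAdjMatrix, hmeet]
  refine isConj_iff.2 (exists_conj_of_trace_meetLeOneAdjMatrix_pow_four_eq φ ψ ?_)
  rw [← hadj, Matrix.trace_pow_submatrix_equiv]

lemma sumCongr_image_Ablock (σ : Perm (Fin n)) (i : Fin n) :
    sumCongr σ σ '' Ablock n i = Ablock n (σ i) := by
  rw [Equiv.image_eq_preimage_symm]
  ext (k | k) <;> simp [Equiv.symm_apply_eq]

lemma sumCongr_image_Bblock {σ : Perm (Fin n)} (hσ : ∀ k, σ (φ k) = ψ (σ k)) (i : Fin n) :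
    sumCongr σ σ '' Bblock n φ i = Bblock n ψ (σ i) := by
  rw [Equiv.image_eq_preimage_symm]
  ext (k | k) <;> simp [Equiv.symm_apply_eq, hσ]

lemma sumCongr_image_mem_MBlocks {σ : Perm (Fin n)} (hσ : ∀ k, σ (φ k) = ψ (σ k))
    {S : Set (MPoint n)} (hS : S ∈ MBlocks n φ) : sumCongr σ σ '' S ∈ MBlocks n ψ := by
  rcases hS with ⟨i, rfl⟩ | ⟨i, rfl⟩
  · exact Or.inl ⟨σ i, (sumCongr_image_Ablock σ i).symm⟩
  · exact Or.inr ⟨σ i, (sumCongr_image_Bblock hσ i).symm⟩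

theorem MIso_of_isConj (h : IsConj φ ψ) : MIso n φ ψ := by
  obtain ⟨σ, hσ⟩ := Perm.isConj_iff_exists_comp_eq.1 h
  have hσsymm : ∀ k, σ.symm (ψ k) = φ (σ.symm k) := fun k => by
    rw [symm_apply_eq, hσ, apply_symm_apply]
  refine ⟨sumCongr σ σ, fun S => ⟨sumCongr_image_mem_MBlocks hσ, fun hS => ?_⟩⟩
  have := sumCongr_image_mem_MBlocks hσsymm hS
  rwa [← Equiv.sumCongr_symm, Equiv.symm_image_image] at this

theorem MIso_iff_isConj (hn : 4 ≤ n) : MIso n φ ψ ↔ IsConj φ ψ := by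
  refine ⟨fun h => ?_, MIso_of_isConj⟩
  rcases hn.eq_or_lt with rfl | h5
  · exact isConj_of_MIso_four h
  · exact isConj_of_MIso_of_five_le h5 h

end MobiusPair

lemma Nat.Partition.sum_filter_add_sum_filter_not {N : ℕ} (p : N.Partition) (q : ℕ → Prop)
    [DecidablePred q] : (p.parts.filter q).sum + (p.parts.filter (¬ q ·)).sum = N := by
  rw [← Multiset.sum_add, Multiset.filter_add_not, p.parts_sum]

lemma Nat.Partition.parts_eq_filter_add_replicate {N : ℕ} (p : N.Partition) :
    p.parts = p.parts.filter (2 ≤ ·) +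
      Multiset.replicate (N - (p.parts.filter (2 ≤ ·)).sum) 1 := by
  have hones : p.parts.filter (¬ 2 ≤ ·) =
      Multiset.replicate (Multiset.card (p.parts.filter (¬ 2 ≤ ·))) 1 :=
    Multiset.eq_replicate_card.2 fun b hb => by
      have := p.parts_pos (Multiset.mem_filter.1 hb).1
      have := (Multiset.mem_filter.1 hb).2
      omega
  have hsum := p.sum_filter_add_sum_filter_not (2 ≤ ·)
  rw [hones, Multiset.sum_replicate, smul_eq_mul, mul_one] at hsum
  rw [show N - (p.parts.filter (2 ≤ ·)).sum = Multiset.card (p.parts.filter (¬ 2 ≤ ·)) by omega,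
    ← hones, Multiset.filter_add_not]

lemma Equiv.Perm.partition_surjective {α : Type*} [Fintype α] [DecidableEq α] :
    Surjective (Perm.partition : Perm α → (Fintype.card α).Partition) := by
  intro p
  have hsum := p.sum_filter_add_sum_filter_not (2 ≤ ·)
  obtain ⟨g, hg⟩ := (Perm.exists_with_cycleType_iff α (m := p.parts.filter (2 ≤ ·))).2
    ⟨by omega, fun a ha => (Multiset.mem_filter.1 ha).2⟩
  refine ⟨g, Nat.Partition.ext ?_⟩
  rw [Perm.parts_partition, ← Perm.sum_cycleType, hg, ← p.parts_eq_filter_add_replicate]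

lemma Function.Surjective.ncard_fibers_eq {X Y : Type*} [Finite Y] {π : X → Y}
    (hπ : Surjective π) : {C : Set X | ∃ x, C = π ⁻¹' {π x}}.ncard = Nat.card Y := by
  have hrange : {C : Set X | ∃ x, C = π ⁻¹' {π x}} = Set.range fun y => π ⁻¹' {y} := by
    ext C
    simp [hπ.exists, eq_comm]
  rw [hrange]
  exact Set.ncard_range_of_injective (hπ.preimage_injective.comp Set.singleton_injective)

/-- The number of isomorphism classes of Möbius n-pairs equals the number p(n) of
partitions of n. -/
theorem stmt14 (n : ℕ) (hn : 4 ≤ n) :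
    {C : Set (Equiv.Perm (Fin n)) | ∃ φ : Equiv.Perm (Fin n),
        C = {ψ | MIso n φ ψ}}.ncard = Fintype.card (Nat.Partition n) := by
  have hclass : ∀ φ : Perm (Fin n), {ψ | MIso n φ ψ} = Perm.partition ⁻¹' {φ.partition} :=
    fun φ => by
      ext ψ
      rw [Set.mem_ofPred_eq, Set.mem_preimage, Set.mem_singleton_iff,
        MobiusPair.MIso_iff_isConj hn, Perm.partition_eq_of_isConj, eq_comm]
  simp_rw [hclass]
  rw [Perm.partition_surjective.ncard_fibers_eq, Nat.card_eq_fintype_card,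
    Fintype.card_fin]
end

section
/- Let n ≥ 3 and let φ be a permutation of I = {1,…,n}. The map g_0 defined on the points of 𝔐_{(n,φ)} by g_0(a_i) = b_{φ⁻¹(i)} and g_0(b_i) = a_i for all i ∈ I is an automorphism of 𝔐_{(n,φ)} which maps each A-block A_i onto the B-block B_{φ⁻¹(i)} and each B-block B_i onto the A-block A_i; in particular it interchanges the simplices S_A and S_B. -/
/-!
Relabelling `A` by `φ⁻¹`, the map `g₀` just swaps the two copies of `Fin n`; it therefore sends
`A_i` to `B_{φ⁻¹ i}` and `B_i` to `A_i`, so it permutes the blocks, and a bijection that permutes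
the blocks is an automorphism.
-/

theorem Equiv.Perm.image_setOf_ne {α : Type*} (σ : Equiv.Perm α) (i : α) :
    σ '' {j | j ≠ i} = {j | j ≠ σ i} := by
  ext j
  simp [Equiv.image_eq_preimage_symm, Equiv.symm_apply_eq]

namespace MoebiusPair

variable {n : ℕ} {φ : Equiv.Perm (Fin n)} {g : MPoint n → MPoint n}

variable (hga : ∀ i, g (Sum.inl i) = Sum.inr (φ⁻¹ i))
variable (hgb : ∀ i, g (Sum.inr i) = Sum.inl i)

include hga in
theorem image_image_inl (s : Set (Fin n)) : g '' (Sum.inl '' s) = Sum.inr '' (⇑φ⁻¹ '' s) := by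
  simp only [Set.image_image, hga]

include hgb in
theorem image_image_inr (s : Set (Fin n)) : g '' (Sum.inr '' s) = Sum.inl '' s := by
  simp only [Set.image_image, hgb]

include hga hgb in
theorem image_Ablock (i : Fin n) : g '' Ablock n i = Bblock n φ (φ⁻¹ i) := by
  rw [Ablock, Bblock, Set.image_union, Set.image_singleton, image_image_inl hga,
    Equiv.Perm.image_setOf_ne, hgb, Equiv.Perm.coe_inv, Equiv.apply_symm_apply]

include hga hgb in
theorem image_Bblock (i : Fin n) : g '' Bblock n φ i = Ablock n i := by
  rw [Ablock, Bblock, Set.image_union, Set.image_singleton, image_image_inr hgb, hga,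
    Equiv.Perm.coe_inv, Equiv.symm_apply_apply]

include hga in
theorem image_range_inl : g '' Set.range Sum.inl = Set.range Sum.inr := by
  rw [← Set.image_univ, image_image_inl hga,
    Set.image_univ_of_surjective (Equiv.surjective _), Set.image_univ]

include hgb in
theorem image_range_inr : g '' Set.range Sum.inr = Set.range Sum.inl := by
  rw [← Set.image_univ, image_image_inr hgb, Set.image_univ]

include hga hgb in
theorem image_ABlocks : (g '' ·) '' ABlocks n = BBlocks n φ := by
  rw [ABlocks, BBlocks, ← Set.range_comp]
  have himage : (g '' ·) ∘ Ablock n = Bblock n φ ∘ ⇑φ⁻¹ := funext (image_Ablock hga hgb)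
  rw [himage, (Equiv.surjective _).range_comp]

include hga hgb in
theorem image_BBlocks : (g '' ·) '' BBlocks n φ = ABlocks n := by
  rw [ABlocks, BBlocks, ← Set.range_comp]
  exact congrArg Set.range (funext (image_Bblock hga hgb))

include hga hgb in
theorem image_MBlocks : (g '' ·) '' MBlocks n φ = MBlocks n φ := by
  rw [MBlocks, Set.image_union, image_ABlocks hga hgb, image_BBlocks hga hgb, Set.union_comm]

end MoebiusPair

open MoebiusPair in
theorem stmt17_general (n : ℕ) (φ : Equiv.Perm (Fin n))
    (g : MPoint n ≃ MPoint n)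
    (hga : ∀ i, g (Sum.inl i) = Sum.inr (φ⁻¹ i))
    (hgb : ∀ i, g (Sum.inr i) = Sum.inl i) :
    (∀ S : Set (MPoint n), S ∈ MBlocks n φ ↔ ⇑g '' S ∈ MBlocks n φ) ∧
    (∀ i, ⇑g '' Ablock n i = Bblock n φ (φ⁻¹ i)) ∧
    (∀ i, ⇑g '' Bblock n φ i = Ablock n i) ∧
    ⇑g '' Set.range Sum.inl = Set.range Sum.inr ∧
    ⇑g '' Set.range Sum.inr = Set.range Sum.inl ∧
    (fun l => ⇑g '' l) '' ABlocks n = BBlocks n φ ∧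
    (fun l => ⇑g '' l) '' BBlocks n φ = ABlocks n := by
  refine ⟨fun S => ?_, image_Ablock hga hgb, image_Bblock hga hgb, image_range_inl hga,
    image_range_inr hgb, image_ABlocks hga hgb, image_BBlocks hga hgb⟩
  conv_rhs => rw [← image_MBlocks hga hgb]
  exact ((Set.image_injective.mpr g.injective).mem_set_image).symm

/-- The map g₀ : a_i ↦ b_{φ⁻¹(i)}, b_i ↦ a_i is an automorphism of 𝔐_{(n,φ)} sending
A_i to B_{φ⁻¹(i)} and B_i to A_i; in particular it interchanges the simplices S_A and S_B. -/
theorem stmt17 (n : ℕ) (hn : 3 ≤ n) (φ : Equiv.Perm (Fin n))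
    (g : MPoint n ≃ MPoint n)
    (hga : ∀ i, g (Sum.inl i) = Sum.inr (φ⁻¹ i))
    (hgb : ∀ i, g (Sum.inr i) = Sum.inl i) :
    (∀ S : Set (MPoint n), S ∈ MBlocks n φ ↔ ⇑g '' S ∈ MBlocks n φ) ∧
    (∀ i, ⇑g '' Ablock n i = Bblock n φ (φ⁻¹ i)) ∧
    (∀ i, ⇑g '' Bblock n φ i = Ablock n i) ∧
    ⇑g '' Set.range Sum.inl = Set.range Sum.inr ∧
    ⇑g '' Set.range Sum.inr = Set.range Sum.inl ∧
    (fun l => ⇑g '' l) '' ABlocks n = BBlocks n φ ∧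
    (fun l => ⇑g '' l) '' BBlocks n φ = ABlocks n :=
  stmt17_general n φ g hga hgb
end
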